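/- Let v ∈ ℤ³ be a nonzero vector with greatest divisor k (so v = k·u with u primitive), suppose d² ∣ ‖v‖² and gcd(k, d) = 1, and let Γ be a cubic sublattice of edge length d containing v. Then Γ also contains u = v/k. -/

import Mathlib

/-- Dot product on `ℤ³`. -/
def dot3 (a b : Fin 3 → ℤ) : ℤ := a 0 * b 0 + a 1 * b 1 + a 2 * b 2

/-- Cross product on `ℤ³`. -/
def cross3 (a b : Fin 3 → ℤ) : Fin 3 → ℤ :=
  ![a 1 * b 2 - a 2 * b 1, a 2 * b 0 - a 0 * b 2, a 0 * b 1 - a 1 * b 0]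

/-- A vector of `ℤ³` is primitive if its coordinates are coprime. -/
def Primitive (v : Fin 3 → ℤ) : Prop := Int.gcd (Int.gcd (v 0) (v 1)) (v 2) = 1

/-- A cubic sublattice of `ℤ³` with edge length `d`: a subgroup generated by three
pairwise orthogonal vectors of length `d`. -/
def IsCubicLattice (Γ : AddSubgroup (Fin 3 → ℤ)) (d : ℕ) : Prop :=
  ∃ a b c : Fin 3 → ℤ,
    Γ = AddSubgroup.closure {a, b, c} ∧
    dot3 a b = 0 ∧ dot3 a c = 0 ∧ dot3 b c = 0 ∧
    dot3 a a = (d : ℤ)^2 ∧ dot3 b b = (d : ℤ)^2 ∧ dot3 c c = (d : ℤ)^2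

/-!
If `a, b, c` are pairwise orthogonal of length `d`, the matrix `M` with these rows satisfies
`M Mᵀ = d² I`, hence also `Mᵀ M = d² I`; that is, `d² x = ⟪x, a⟫ a + ⟪x, b⟫ b + ⟪x, c⟫ c`, so
`d² ℤ³ ⊆ Γ`. Thus both `k u = v` and `d² u` lie in `Γ`, and a Bézout combination of them,
available since `gcd(k, d²) = 1`, gives `u ∈ Γ`.
-/

open Matrix

theorem Matrix.transpose_mul_self_eq_smul_one {R n : Type*} [CommRing R] [IsDomain R]
    [Fintype n] [DecidableEq n] {A : Matrix n n R} {c : R} (hc : c ≠ 0)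
    (hA : A * Aᵀ = c • 1) : Aᵀ * A = c • 1 := by
  have hdet : Aᵀ.det ≠ 0 := by
    have h := congrArg det hA
    rw [det_mul, det_smul, det_one, mul_one] at h
    exact right_ne_zero_of_mul (h ▸ pow_ne_zero _ hc)
  have hzero : (Aᵀ * A - c • 1) * Aᵀ = 0 := by
    rw [sub_mul, Matrix.mul_assoc, hA, Matrix.mul_smul, Matrix.smul_mul, Matrix.mul_one,
      Matrix.one_mul, sub_self]
  have hdet_smul : Aᵀ.det • (Aᵀ * A - c • 1) = 0 := by
    rw [← Matrix.mul_one (Aᵀ * A - c • 1), ← Matrix.mul_smul, ← mul_adjugate,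
      ← Matrix.mul_assoc, hzero, Matrix.zero_mul]
  exact sub_eq_zero.mp ((smul_eq_zero.mp hdet_smul).resolve_left hdet)

theorem AddSubgroup.mem_of_zsmul_mem_of_isCoprime {G : Type*} [AddGroup G]
    {H : AddSubgroup G} {x : G} {m n : ℤ} (hmn : IsCoprime m n)
    (hm : m • x ∈ H) (hn : n • x ∈ H) : x ∈ H := by
  obtain ⟨s, t, hst⟩ := hmn
  have hx : x = s • m • x + t • n • x := by
    rw [← mul_zsmul, ← mul_zsmul, ← add_zsmul, hst, one_zsmul]
  rw [hx]
  exact add_mem (zsmul_mem hm s) (zsmul_mem hn t)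

theorem dot3_eq_dotProduct (a b : Fin 3 → ℤ) : dot3 a b = a ⬝ᵥ b := by
  simp [dot3, dotProduct, Fin.sum_univ_three]

theorem IsCubicLattice.sq_smul_mem {Γ : AddSubgroup (Fin 3 → ℤ)} {d : ℕ}
    (hΓ : IsCubicLattice Γ d) (x : Fin 3 → ℤ) : (d : ℤ) ^ 2 • x ∈ Γ := by
  obtain rfl | hd := Nat.eq_zero_or_pos d
  · simp
  obtain ⟨a, b, c, rfl, hab, hac, hbc, haa, hbb, hcc⟩ := hΓ
  simp only [dot3_eq_dotProduct] at hab hac hbc haa hbb hcc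
  let M : Matrix (Fin 3) (Fin 3) ℤ := ![a, b, c]
  have hrows : M * Mᵀ = (d : ℤ) ^ 2 • 1 := by
    ext i j
    simp only [mul_apply', transpose_apply]
    fin_cases i <;> fin_cases j <;> simp [M, dotProduct_comm, *]
  have hcols := transpose_mul_self_eq_smul_one (by positivity) hrows
  have hx : (d : ℤ) ^ 2 • x = ∑ i, (M *ᵥ x) i • M i := by
    rw [← vecMul_eq_sum, ← mulVec_transpose, mulVec_mulVec, hcols, smul_mulVec, one_mulVec]
  rw [hx]
  refine sum_mem fun i _ => zsmul_mem (AddSubgroup.subset_closure ?_) _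
  fin_cases i <;> simp [M]

theorem primitive_part_mem (u v : Fin 3 → ℤ) (k : ℕ)
    (hv : v = (k : ℤ) • u)
    (d : ℕ)
    (hcop : Nat.gcd k d = 1)
    (Γ : AddSubgroup (Fin 3 → ℤ)) (hΓ : IsCubicLattice Γ d) (hvΓ : v ∈ Γ) :
    u ∈ Γ := by
  have hcop_sq : IsCoprime (k : ℤ) ((d : ℤ) ^ 2) := by
    exact_mod_cast Nat.isCoprime_iff_coprime.mpr (Nat.Coprime.pow_right 2 hcop)
  exact AddSubgroup.mem_of_zsmul_mem_of_isCoprime hcop_sq (hv ▸ hvΓ) (hΓ.sq_smul_mem u)
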